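/- arXiv:2207.08153 — 5 statements merged into one kernel-verified Lean document; each statement's English description precedes it below -/
import Mathlib

section
/- If a family (q_{ij})_{i,j ∈ ℤ/Nℤ} in A satisfies the anyonic permutation relations, then the matrix q = (q_{ij}) is unitary over A: for all i,j ∈ ℤ/Nℤ, ∑_{k ∈ ℤ/Nℤ} q_{ki}* q_{kj} = δ_{ij}·1 and ∑_{k ∈ ℤ/Nℤ} q_{ik} q_{jk}* = δ_{ij}·1. -/
noncomputable section

/-- `ω ^ m` for `m ∈ ℤ/Nℤ`; this is well defined (independent of the chosen
representative) as soon as `ω ^ N = 1`. -/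
def wpow (N : ℕ) (ω : ℂ) (m : ZMod N) : ℂ := ω ^ m.val

/-- `z ^ m` for `m ∈ ℤ/Nℤ`; well defined when `z ^ N = 1`. -/
def apow {A : Type*} [Monoid A] (N : ℕ) (z : A) (m : ZMod N) : A := z ^ m.val

/-- The anyonic permutation relations for a family `(q i j)` indexed by `ℤ/Nℤ × ℤ/Nℤ`. -/
def AnyonicPermRel (N : ℕ) [NeZero N] (ω : ℂ) {A : Type*} [Ring A] [StarRing A]
    [Algebra ℂ A] (q : ZMod N → ZMod N → A) : Prop :=
  (∀ i : ZMod N, q 0 i = if i = 0 then 1 else 0) ∧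
  (∀ i : ZMod N, q i 0 = if i = 0 then 1 else 0) ∧
  (∀ i j : ZMod N, star (q i j) = wpow N ω (-(i * (i - j))) • q (-i) (-j)) ∧
  (∀ i j k : ZMod N, q k (i + j) =
    ∑ l : ZMod N, wpow N ω (-(l * (i - k + l))) • (q (k - l) i * q l j)) ∧
  (∀ i j k : ZMod N, q (i + j) k =
    ∑ l : ZMod N, wpow N ω (-(i * (l - j))) • (q j l * q i (k - l)))

/-- The untwisted relations for a family `(a i j)` indexed by `ℤ/Nℤ × ℤ/Nℤ`. -/
def UntwistedRel (N : ℕ) [NeZero N] {A : Type*} [Ring A] [StarRing A]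
    (a : ZMod N → ZMod N → A) : Prop :=
  (∀ i : ZMod N, a i 0 = if i = 0 then 1 else 0) ∧
  (∀ i j : ZMod N, star (a i j) = a (-i) (-j)) ∧
  (∀ i j k : ZMod N, ∑ l : ZMod N, a (k - l) i * a l j = a k (i + j)) ∧
  (∀ i j k : ZMod N, ∑ l : ZMod N, a j l * a i (k - l) = a (i + j) k)

/-- A matrix `(m i j)` over a unital `*`-algebra is unitary. -/
def IsUnitaryMatrix (N : ℕ) [NeZero N] {A : Type*} [Ring A] [StarRing A]
    (m : ZMod N → ZMod N → A) : Prop :=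
  (∀ i j : ZMod N, ∑ k : ZMod N, star (m k i) * m k j = if i = j then 1 else 0) ∧
  (∀ i j : ZMod N, ∑ k : ZMod N, m i k * star (m j k) = if i = j then 1 else 0)

/-- The twisted conjugate matrix `ū_R` with entries `ω^{-i(j-i)} u_{ij}*`. -/
def conjR (N : ℕ) (ω : ℂ) {A : Type*} [Ring A] [StarRing A] [Algebra ℂ A]
    (u : ZMod N → ZMod N → A) : ZMod N → ZMod N → A :=
  fun i j => wpow N ω (-(i * (j - i))) • star (u i j)

/-- A magic unitary: entries are projections and all rows and columns sum to `1`. -/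
def IsMagicUnitary (N : ℕ) [NeZero N] {A : Type*} [Ring A] [StarRing A]
    (u : ZMod N → ZMod N → A) : Prop :=
  (∀ i j : ZMod N, u i j * u i j = u i j) ∧
  (∀ i j : ZMod N, star (u i j) = u i j) ∧
  (∀ j : ZMod N, ∑ i : ZMod N, u i j = 1) ∧
  (∀ i : ZMod N, ∑ j : ZMod N, u i j = 1)


lemma wpow_add' {N : ℕ} [NeZero N] {ω : ℂ} (hω : ω ^ N = 1) (a b : ZMod N) :
    wpow N ω (a + b) = wpow N ω a * wpow N ω b := by
  unfold wpow
  rw [ZMod.val_add, ← pow_add]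
  conv_rhs => rw [← Nat.div_add_mod (a.val + b.val) N]
  rw [pow_add, pow_mul, hω, one_pow, one_mul]

theorem stmt_2 (N : ℕ) [NeZero N] (hN : 2 ≤ N) (ω : ℂ) (hω : IsPrimitiveRoot ω N)
    {A : Type*} [NormedRing A] [StarRing A] [CStarRing A]
    [NormedAlgebra ℂ A] [CompleteSpace A] [StarModule ℂ A]
    (q : ZMod N → ZMod N → A) (hq : AnyonicPermRel N ω q) :
    (∀ i j : ZMod N, ∑ k : ZMod N, star (q k i) * q k j = if i = j then 1 else 0) ∧
    (∀ i j : ZMod N, ∑ k : ZMod N, q i k * star (q j k) = if i = j then 1 else 0) := by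
  obtain ⟨h0, h0', hstar, h3, h4⟩ := hq
  have hω1 : ω ^ N = 1 := hω.pow_eq_one
  have hw0 : wpow N ω 0 = 1 := by simp [wpow, ZMod.val_zero]
  constructor
  · intro i j
    have key := h3 (-i) j 0
    have e1 : ∀ l : ZMod N, -(l * (-i - 0 + l)) = -(l * (l - i)) := fun l => by ring
    simp only [e1, zero_sub] at key
    calc ∑ k : ZMod N, star (q k i) * q k j
        = ∑ l : ZMod N, wpow N ω (-(l * (l - i))) • (q (-l) (-i) * q l j) := by
          refine Finset.sum_congr rfl fun k _ => ?_
          rw [hstar, smul_mul_assoc]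
      _ = q 0 (-i + j) := key.symm
      _ = _ := by
          rw [h0]
          by_cases h : i = j
          · simp [h]
          · have h1 : -i + j ≠ 0 := fun e => h (neg_add_eq_zero.mp e)
            simp [h, h1]
  · intro i j
    have key := h4 (-j) i 0
    have e1 : ∀ l : ZMod N, -(-j * (l - i)) = j * (l - i) := fun l => by ring
    simp only [e1, zero_sub] at key
    calc ∑ k : ZMod N, q i k * star (q j k)
        = ∑ k : ZMod N, wpow N ω (-(j * (j - i))) •
            (wpow N ω (j * (k - i)) • (q i k * q (-j) (-k))) := by
          refine Finset.sum_congr rfl fun k _ => ?_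
          rw [hstar, mul_smul_comm, smul_smul, ← wpow_add' hω1]
          congr 2
          ring
      _ = wpow N ω (-(j * (j - i))) •
            ∑ k : ZMod N, wpow N ω (j * (k - i)) • (q i k * q (-j) (-k)) :=
          (Finset.smul_sum).symm
      _ = wpow N ω (-(j * (j - i))) • q (-j + i) 0 := by rw [← key]
      _ = _ := by
          rw [h0']
          by_cases h : i = j
          · simp [h, hw0]
          · have h1 : -j + i ≠ 0 := fun e => h (neg_add_eq_zero.mp e).symm
            simp [h, h1]
end
end

section
/- If a family (q_{ij})_{i,j ∈ ℤ/Nℤ} in the unital C*-algebra A satisfies the anyonic permutation relations, then ‖q_{ij}‖ ≤ 1 for all i,j ∈ ℤ/Nℤ. -/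
noncomputable section

lemma wpow_mul_wpow (N : ℕ) [NeZero N] (ω : ℂ) (hω : ω ^ N = 1) (a b : ZMod N) :
    wpow N ω a * wpow N ω b = wpow N ω (a + b) := by
  unfold wpow
  rw [← pow_add, ZMod.val_add]
  conv_lhs => rw [← Nat.mod_add_div (a.val + b.val) N, pow_add, pow_mul, hω, one_pow, mul_one]

lemma wpow_zero (N : ℕ) [NeZero N] (ω : ℂ) : wpow N ω 0 = 1 := by
  simp [wpow, ZMod.val_zero]

theorem stmt_4 (N : ℕ) [NeZero N] (hN : 2 ≤ N) (ω : ℂ) (hω : IsPrimitiveRoot ω N)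
    {A : Type*} [NormedRing A] [StarRing A] [CStarRing A]
    [NormedAlgebra ℂ A] [CompleteSpace A] [StarModule ℂ A]
    (q : ZMod N → ZMod N → A) (hq : AnyonicPermRel N ω q) :
    ∀ i j : ZMod N, ‖q i j‖ ≤ 1 := by
  have hωN : ω ^ N = 1 := hω.pow_eq_one
  obtain ⟨h1, h2, hstar, h4, h5⟩ := hq
  -- key identity: each row is a "unit vector"
  have key : ∀ j : ZMod N, ∑ l : ZMod N, q j l * star (q j l) = 1 := by
    intro j
    have h := h5 (-j) j 0
    rw [neg_add_cancel, h1 0, if_pos rfl] at h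
    have hterm : ∀ l : ZMod N,
        wpow N ω (-(-j * (l - j))) • (q j l * q (-j) (0 - l)) = q j l * star (q j l) := by
      intro l
      have hs : q (-j) (-l) = wpow N ω (j * (j - l)) • star (q j l) := by
        rw [hstar j l, smul_smul, wpow_mul_wpow N ω hωN]
        rw [show j * (j - l) + -(j * (j - l)) = 0 by ring, wpow_zero, one_smul]
      rw [zero_sub, hs, mul_smul_comm, smul_smul, wpow_mul_wpow N ω hωN]
      rw [show -(-j * (l - j)) + j * (j - l) = 0 by ring, wpow_zero, one_smul]
    rw [Finset.sum_congr rfl (fun l _ => hterm l)] at h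
    exact h.symm
  intro i j
  letI : CStarAlgebra A := { }
  letI : PartialOrder A := CStarAlgebra.spectralOrder A
  letI : StarOrderedRing A := CStarAlgebra.spectralOrderedRing A
  have hpos : ∀ l : ZMod N, (0 : A) ≤ q i l * star (q i l) := fun l => mul_star_self_nonneg _
  have hle : q i j * star (q i j) ≤ 1 := by
    rw [← key i]
    exact Finset.single_le_sum (fun l _ => hpos l) (Finset.mem_univ j)
  have hnorm : ‖q i j * star (q i j)‖ ≤ 1 :=
    (CStarAlgebra.norm_le_one_iff_of_nonneg _ (hpos j)).2 hle
  rw [CStarRing.norm_self_mul_star] at hnorm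
  nlinarith [norm_nonneg (q i j)]
end
end

section
/- Let z ∈ A be a unitary with z^N = 1, and let (q_{ij}) be a family in A satisfying the anyonic permutation relations together with the commutation relations z q_{ij} = ω^{j-i} q_{ij} z for all i,j ∈ ℤ/Nℤ. Then the matrix t with entries t_{ij} := z^i q_{ij} is unitary over A: ∑_{k} t_{ki}* t_{kj} = δ_{ij}·1 and ∑_{k} t_{ik} t_{jk}* = δ_{ij}·1 for all i,j ∈ ℤ/Nℤ. -/
noncomputable section

private lemma my_pow_mod_eq {M : Type*} [Monoid M] {N : ℕ} {z : M} (hzN : z ^ N = 1) (x : ℕ) :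
    z ^ (x % N) = z ^ x := by
  conv_rhs => rw [← Nat.mod_add_div x N]
  rw [pow_add, pow_mul, hzN, one_pow, mul_one]

private lemma my_apow_natCast {M : Type*} [Monoid M] {N : ℕ} [NeZero N] {z : M}
    (hzN : z ^ N = 1) (x : ℕ) : apow N z (x : ZMod N) = z ^ x := by
  rw [apow, ZMod.val_natCast, my_pow_mod_eq hzN]

private lemma my_wpow_natCast {N : ℕ} [NeZero N] {ω : ℂ} (hωN : ω ^ N = 1) (x : ℕ) :
    wpow N ω (x : ZMod N) = ω ^ x :=
  my_apow_natCast (z := ω) hωN x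

private lemma my_cast_val {N : ℕ} [NeZero N] (a : ZMod N) : ((a.val : ℕ) : ZMod N) = a := by
  simp [ZMod.natCast_val, ZMod.cast_id]

private lemma my_wpow_add {N : ℕ} [NeZero N] {ω : ℂ} (hωN : ω ^ N = 1) (a b : ZMod N) :
    wpow N ω (a + b) = wpow N ω a * wpow N ω b := by
  have h : a + b = ((a.val + b.val : ℕ) : ZMod N) := by push_cast [my_cast_val]; ring
  rw [h, my_wpow_natCast hωN, pow_add]; rfl

private lemma my_wpow_pow {N : ℕ} [NeZero N] {ω : ℂ} (hωN : ω ^ N = 1) (c : ZMod N) (n : ℕ) :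
    wpow N ω c ^ n = wpow N ω ((n : ZMod N) * c) := by
  have h : (n : ZMod N) * c = ((n * c.val : ℕ) : ZMod N) := by push_cast [my_cast_val]; ring
  rw [h, my_wpow_natCast hωN, wpow, ← pow_mul, mul_comm]

private lemma my_wpow_zero {N : ℕ} [NeZero N] (ω : ℂ) : wpow N ω 0 = 1 := by
  simp [wpow]

private lemma my_pow_star_pow {A : Type*} [Monoid A] [StarMul A] (z : A)
    (h : star z * z = 1) (n : ℕ) : star z ^ n * z ^ n = 1 := by
  induction n with
  | zero => simp
  | succ n ih =>
    rw [pow_succ (star z), pow_succ' z, mul_assoc, ← mul_assoc (star z), h, one_mul, ih]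

theorem stmt_8 (N : ℕ) [NeZero N] (hN : 2 ≤ N) (ω : ℂ) (hω : IsPrimitiveRoot ω N)
    {A : Type*} [NormedRing A] [StarRing A] [CStarRing A]
    [NormedAlgebra ℂ A] [CompleteSpace A] [StarModule ℂ A]
    (z : A) (hz : star z * z = 1 ∧ z * star z = 1) (hzN : z ^ N = 1)
    (q : ZMod N → ZMod N → A) (hq : AnyonicPermRel N ω q)
    (hcomm : ∀ i j : ZMod N, z * q i j = wpow N ω (j - i) • (q i j * z)) :
    IsUnitaryMatrix N (fun i j => apow N z i * q i j) := by
  obtain ⟨hq0, hq0', hstar, hrel3, hrel4⟩ := hq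
  have hωN : ω ^ N = 1 := hω.pow_eq_one
  -- star of apow, and unitarity of apow
  have hstarz : ∀ m : ZMod N, star (apow N z m) * apow N z m = 1 := by
    intro m
    rw [apow, star_pow]
    exact my_pow_star_pow z hz.1 m.val
  have hzstar : ∀ m : ZMod N, apow N z m * star (apow N z m) = 1 := by
    intro m
    rw [apow, star_pow]
    have h := my_pow_star_pow (star z) (by rw [star_star]; exact hz.2) m.val
    rwa [star_star] at h
  -- commutation of apow with q
  have hapowcomm : ∀ m a b : ZMod N,
      apow N z m * q a b = wpow N ω (m * (b - a)) • (q a b * apow N z m) := by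
    intro m a b
    have hn : ∀ n : ℕ, z ^ n * q a b = wpow N ω (b - a) ^ n • (q a b * z ^ n) := by
      intro n
      induction n with
      | zero => simp
      | succ n ih =>
        rw [pow_succ' z, mul_assoc, ih, mul_smul_comm, ← mul_assoc, hcomm a b,
          smul_mul_assoc, smul_smul, mul_assoc, ← pow_succ]
    have := hn m.val
    rw [apow, this, my_wpow_pow hωN, my_cast_val]
  constructor
  · -- rows
    intro i j
    have h3 := hrel3 (-i) j 0
    simp only [zero_sub, sub_zero, neg_add_eq_sub] at h3
    calc (∑ k : ZMod N, star (apow N z k * q k i) * (apow N z k * q k j))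
        = ∑ k : ZMod N, star (q k i) * q k j := by
          apply Finset.sum_congr rfl
          intro k _
          rw [star_mul, mul_assoc, ← mul_assoc (star (apow N z k)), hstarz k, one_mul]
      _ = ∑ l : ZMod N, wpow N ω (-(l * (l - i))) • (q (-l) (-i) * q l j) := by
          apply Finset.sum_congr rfl
          intro k _
          rw [hstar, smul_mul_assoc]
      _ = q 0 (j - i) := h3.symm
      _ = if i = j then 1 else 0 := by
          rw [hq0]
          congr 1
          simp [sub_eq_zero, eq_comm]
  · -- columns
    intro i j
    set w : A := apow N z i * star (apow N z j) with hw
    set d : ZMod N := i * (j - i) - j * (j - i) with hd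
    have hterm : ∀ k : ZMod N,
        (apow N z i * q i k) * star (apow N z j * q j k) =
          wpow N ω (j * (k - i) + d) • ((q i k * q (-j) (-k)) * w) := by
      intro k
      rw [star_mul, hstar j k, ← mul_assoc, mul_assoc (apow N z i * q i k),
        smul_mul_assoc, mul_smul_comm]
      rw [hapowcomm i i k, smul_mul_assoc, smul_smul]
      rw [mul_assoc (q i k), ← mul_assoc (apow N z i), hapowcomm i (-j) (-k)]
      rw [smul_mul_assoc, mul_smul_comm, smul_smul]
      rw [mul_assoc (q (-j) (-k)), ← mul_assoc (q i k), ← hw]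
      congr 1
      rw [← my_wpow_add hωN, ← my_wpow_add hωN]
      congr 1
      ring
    have hinner : (∑ k : ZMod N, wpow N ω (j * (k - i)) • (q i k * q (-j) (-k)))
        = q (i - j) 0 := by
      have h4 := hrel4 (-j) i 0
      simp only [zero_sub, neg_add_eq_sub, neg_mul, neg_neg] at h4
      exact h4.symm
    calc (∑ k : ZMod N, (apow N z i * q i k) * star (apow N z j * q j k))
        = ∑ k : ZMod N, wpow N ω (d) • ((wpow N ω (j * (k - i)) • (q i k * q (-j) (-k))) * w) := by
          apply Finset.sum_congr rfl
          intro k _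
          rw [hterm k, smul_mul_assoc, smul_smul, ← my_wpow_add hωN, add_comm d]
      _ = wpow N ω d • ((∑ k : ZMod N, wpow N ω (j * (k - i)) • (q i k * q (-j) (-k))) * w) := by
          rw [← Finset.smul_sum, Finset.sum_mul]
      _ = wpow N ω d • (q (i - j) 0 * w) := by rw [hinner]
      _ = if i = j then 1 else 0 := by
          by_cases h : i = j
          · subst h
            rw [if_pos rfl, hq0', if_pos (sub_self i), one_mul, hw, hzstar]
            have : d = 0 := by rw [hd]; ring
            rw [this, my_wpow_zero, one_smul]
          · rw [if_neg h, hq0', if_neg (sub_ne_zero.mpr h), zero_mul, smul_zero]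
end
end

section
/- Let (q_{ij})_{i,j ∈ ℤ/Nℤ} be a family in A satisfying the anyonic permutation relations, and let z ∈ A be a unitary with z^N = 1 such that z q_{ij} = ω^{j-i} q_{ij} z for all i,j ∈ ℤ/Nℤ. Then the family t_{ij} := z^i q_{ij} satisfies the untwisted relations. -/
noncomputable section

section auxlemmas

variable {A : Type*} [Monoid A]

lemma pow_mod_eq {N : ℕ} {z : A} (hz : z ^ N = 1) (x : ℕ) : z ^ (x % N) = z ^ x := by
  conv_rhs => rw [← Nat.mod_add_div x N]
  rw [pow_add, pow_mul, hz, one_pow, mul_one]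

lemma apow_natCast {N : ℕ} [NeZero N] {z : A} (hz : z ^ N = 1) (x : ℕ) :
    apow N z (x : ZMod N) = z ^ x := by
  rw [apow, ZMod.val_natCast, pow_mod_eq hz]

lemma apow_zero {N : ℕ} [NeZero N] (z : A) : apow N z 0 = 1 := by
  simp [apow, ZMod.val_zero]

lemma apow_add {N : ℕ} [NeZero N] {z : A} (hz : z ^ N = 1) (a b : ZMod N) :
    apow N z (a + b) = apow N z a * apow N z b := by
  rw [apow, apow, apow, ZMod.val_add, pow_mod_eq hz, pow_add]

lemma apow_pow {N : ℕ} [NeZero N] {z : A} (hz : z ^ N = 1) (c : ZMod N) (k : ℕ) :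
    (apow N z c) ^ k = apow N z ((k : ZMod N) * c) := by
  rw [apow, ← pow_mul, ← apow_natCast hz (c.val * k)]
  congr 1
  push_cast [ZMod.natCast_zmod_val]
  ring

end auxlemmas

lemma wpow_eq_apow (N : ℕ) (ω : ℂ) (m : ZMod N) : wpow N ω m = apow N ω m := rfl


theorem stmt_14 (N : ℕ) [NeZero N] (hN : 2 ≤ N) (ω : ℂ) (hω : IsPrimitiveRoot ω N)
    {A : Type*} [NormedRing A] [StarRing A] [CStarRing A]
    [NormedAlgebra ℂ A] [CompleteSpace A] [StarModule ℂ A]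
    (q : ZMod N → ZMod N → A) (hq : AnyonicPermRel N ω q)
    (z : A) (hz : star z * z = 1 ∧ z * star z = 1) (hzN : z ^ N = 1)
    (hcomm : ∀ i j : ZMod N, z * q i j = wpow N ω (j - i) • (q i j * z)) :
    UntwistedRel N (fun i j => apow N z i * q i j) := by
  have hωN : ω ^ N = 1 := hω.pow_eq_one
  -- star z = z ^ (N-1)
  have hstarz : star z = z ^ (N - 1) := by
    have h1 : z * z ^ (N - 1) = z ^ N := by
      rw [← pow_succ']; congr 1; omega
    calc star z = star z * z ^ N := by rw [hzN, mul_one]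
      _ = star z * (z * z ^ (N - 1)) := by rw [h1]
      _ = (star z * z) * z ^ (N - 1) := by rw [mul_assoc]
      _ = z ^ (N - 1) := by rw [hz.1, one_mul]
  have hstar_apow : ∀ m : ZMod N, star (apow N z m) = apow N z (-m) := by
    intro m
    rw [apow, star_pow, hstarz, ← pow_mul, ← apow_natCast hzN ((N - 1) * m.val)]
    congr 1
    have h1 : ((N - 1 : ℕ) : ZMod N) = -1 := by
      have : (1:ℕ) ≤ N := by omega
      push_cast [Nat.cast_sub this]
      simp
    push_cast [h1, ZMod.natCast_zmod_val]
    ring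
  have hwadd : ∀ a b : ZMod N, wpow N ω (a + b) = wpow N ω a * wpow N ω b := by
    intro a b; rw [wpow_eq_apow, wpow_eq_apow, wpow_eq_apow, apow_add hωN]
  have hcancel : ∀ x : ZMod N, wpow N ω (-x) * wpow N ω x = 1 := by
    intro x
    rw [← hwadd, neg_add_cancel, wpow_eq_apow, apow_zero]
  -- commutation with natural powers
  have key : ∀ (a b : ZMod N) (n : ℕ),
      z ^ n * q a b = (wpow N ω (b - a)) ^ n • (q a b * z ^ n) := by
    intro a b n
    induction n with
    | zero => simp
    | succ n ih =>
      rw [pow_succ z n, mul_assoc, hcomm a b, mul_smul_comm, ← mul_assoc, ih,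
        smul_mul_assoc, smul_smul, mul_assoc, ← pow_succ z n]
      congr 1
      rw [pow_succ']
  have keym : ∀ (a b m : ZMod N),
      apow N z m * q a b = wpow N ω (m * (b - a)) • (q a b * apow N z m) := by
    intro a b m
    rw [apow, key a b m.val]
    congr 1
    rw [wpow_eq_apow, wpow_eq_apow, apow_pow hωN, ZMod.natCast_zmod_val]
  have keym' : ∀ (a b m : ZMod N),
      q a b * apow N z m = wpow N ω (-(m * (b - a))) • (apow N z m * q a b) := by
    intro a b m
    rw [keym a b m, smul_smul, hcancel, one_smul]
  obtain ⟨h1, h2, h3, h4, h5⟩ := hq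
  refine ⟨?_, ?_, ?_, ?_⟩
  · intro i
    by_cases hi : i = 0
    · simp [hi, h2, apow_zero]
    · simp [hi, h2]
  · intro i j
    calc star (apow N z i * q i j) = star (q i j) * star (apow N z i) := star_mul _ _
      _ = (wpow N ω (-(i * (i - j))) • q (-i) (-j)) * apow N z (-i) := by
          rw [h3, hstar_apow]
      _ = wpow N ω (-(i * (i - j))) • (q (-i) (-j) * apow N z (-i)) := smul_mul_assoc _ _ _
      _ = wpow N ω (-(i * (i - j))) •
            (wpow N ω (-(-i * (-j - -i))) • (apow N z (-i) * q (-i) (-j))) := by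
          rw [keym']
      _ = (wpow N ω (-(i * (i - j))) * wpow N ω (-(-i * (-j - -i)))) •
            (apow N z (-i) * q (-i) (-j)) := smul_smul _ _ _
      _ = apow N z (-i) * q (-i) (-j) := by
          rw [← hwadd]
          have : -(i * (i - j)) + -(-i * (-j - -i)) = 0 := by ring
          rw [this, wpow_eq_apow, apow_zero, one_smul]
  · intro i j k
    have step : ∀ l : ZMod N, (apow N z (k - l) * q (k - l) i) * (apow N z l * q l j)
        = apow N z k * (wpow N ω (-(l * (i - k + l))) • (q (k - l) i * q l j)) := by
      intro l
      have harg : i - k + l = i - (k - l) := by ring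
      rw [harg]
      calc (apow N z (k - l) * q (k - l) i) * (apow N z l * q l j)
          = apow N z (k - l) * (q (k - l) i * apow N z l) * q l j := by
            rw [mul_assoc, mul_assoc, mul_assoc]
        _ = apow N z (k - l) *
              (wpow N ω (-(l * (i - (k - l)))) • (apow N z l * q (k - l) i)) * q l j := by
            rw [keym']
        _ = wpow N ω (-(l * (i - (k - l)))) •
              (apow N z (k - l) * apow N z l * (q (k - l) i * q l j)) := by
            rw [mul_smul_comm, smul_mul_assoc]
            congr 1
            simp only [mul_assoc]
        _ = apow N z k * (wpow N ω (-(l * (i - (k - l)))) • (q (k - l) i * q l j)) := by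
            rw [← apow_add hzN, sub_add_cancel, mul_smul_comm]
    calc ∑ l : ZMod N, (apow N z (k - l) * q (k - l) i) * (apow N z l * q l j)
        = ∑ l : ZMod N, apow N z k *
            (wpow N ω (-(l * (i - k + l))) • (q (k - l) i * q l j)) :=
          Finset.sum_congr rfl (fun l _ => step l)
      _ = apow N z k * ∑ l : ZMod N,
            wpow N ω (-(l * (i - k + l))) • (q (k - l) i * q l j) :=
          (Finset.mul_sum _ _ _).symm
      _ = apow N z k * q k (i + j) := by rw [← h4]
  · intro i j k
    have step : ∀ l : ZMod N, (apow N z j * q j l) * (apow N z i * q i (k - l))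
        = apow N z (i + j) * (wpow N ω (-(i * (l - j))) • (q j l * q i (k - l))) := by
      intro l
      calc (apow N z j * q j l) * (apow N z i * q i (k - l))
          = apow N z j * (q j l * apow N z i) * q i (k - l) := by
            rw [mul_assoc, mul_assoc, mul_assoc]
        _ = apow N z j *
              (wpow N ω (-(i * (l - j))) • (apow N z i * q j l)) * q i (k - l) := by
            rw [keym']
        _ = wpow N ω (-(i * (l - j))) •
              (apow N z j * apow N z i * (q j l * q i (k - l))) := by
            rw [mul_smul_comm, smul_mul_assoc]
            congr 1
            simp only [mul_assoc]
        _ = apow N z (i + j) * (wpow N ω (-(i * (l - j))) • (q j l * q i (k - l))) := by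
            rw [← apow_add hzN, add_comm j i, mul_smul_comm]
    calc ∑ l : ZMod N, (apow N z j * q j l) * (apow N z i * q i (k - l))
        = ∑ l : ZMod N, apow N z (i + j) *
            (wpow N ω (-(i * (l - j))) • (q j l * q i (k - l))) :=
          Finset.sum_congr rfl (fun l _ => step l)
      _ = apow N z (i + j) * ∑ l : ZMod N,
            wpow N ω (-(i * (l - j))) • (q j l * q i (k - l)) :=
          (Finset.mul_sum _ _ _).symm
      _ = apow N z (i + j) * q (i + j) k := by rw [← h5]
end
end

section
/- Let (P_i)_{i ∈ ℤ/Nℤ} be a family in A satisfying P_0 = (1/N)·1, P_i* = P_{-i}, and P_i P_j = (1/N) P_{i+j} for all i,j ∈ ℤ/Nℤ, and let (q_{ij}) be a family in A satisfying the anyonic permutation relations, such that P_i q_{kl} = ω^{i(l-k)} q_{kl} P_i for all i,k,l ∈ ℤ/Nℤ. Then the elements P'_j := ∑_{i ∈ ℤ/Nℤ} P_i q_{ij} satisfy P'_0 = (1/N)·1, (P'_j)* = P'_{-j}, and P'_i P'_j = (1/N) P'_{i+j} for all i,j ∈ ℤ/Nℤ. -/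
noncomputable section

lemma wpow_add_aux (N : ℕ) [NeZero N] (ω : ℂ) (h : ω ^ N = 1) (a b : ZMod N) :
    wpow N ω a * wpow N ω b = wpow N ω (a + b) := by
  have hmod : ∀ x : ℕ, ω ^ (x % N) = ω ^ x := by
    intro x
    conv_rhs => rw [← Nat.mod_add_div x N]
    rw [pow_add, pow_mul, h, one_pow, mul_one]
  unfold wpow
  rw [ZMod.val_add, hmod, pow_add]

lemma wpow_cancel (N : ℕ) [NeZero N] (ω : ℂ) (h : ω ^ N = 1) (a : ZMod N) :
    wpow N ω (-a) * wpow N ω a = 1 := by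
  rw [wpow_add_aux N ω h, neg_add_cancel]
  simp [wpow]

theorem stmt_19 (N : ℕ) [NeZero N] (hN : 2 ≤ N) (ω : ℂ) (hω : IsPrimitiveRoot ω N)
    {A : Type*} [NormedRing A] [StarRing A] [CStarRing A]
    [NormedAlgebra ℂ A] [CompleteSpace A] [StarModule ℂ A]
    (P : ZMod N → A)
    (hP0 : P 0 = (N : ℂ)⁻¹ • (1 : A))
    (hPstar : ∀ i : ZMod N, star (P i) = P (-i))
    (hPmul : ∀ i j : ZMod N, P i * P j = (N : ℂ)⁻¹ • P (i + j))
    (q : ZMod N → ZMod N → A) (hq : AnyonicPermRel N ω q)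
    (hcomm : ∀ i k l : ZMod N, P i * q k l = wpow N ω (i * (l - k)) • (q k l * P i)) :
    (∑ i : ZMod N, P i * q i 0) = (N : ℂ)⁻¹ • (1 : A) ∧
    (∀ j : ZMod N, star (∑ i : ZMod N, P i * q i j) = ∑ i : ZMod N, P i * q i (-j)) ∧
    (∀ i j : ZMod N, (∑ k : ZMod N, P k * q k i) * (∑ k : ZMod N, P k * q k j) =
      (N : ℂ)⁻¹ • ∑ k : ZMod N, P k * q k (i + j)) := by
  obtain ⟨hq1, hq2, hq3, hq4, hq5⟩ := hq
  have hωN : ω ^ N = 1 := hω.pow_eq_one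
  have hcomm' : ∀ a k l : ZMod N,
      q k l * P a = wpow N ω (-(a * (l - k))) • (P a * q k l) := by
    intro a k l
    rw [hcomm, smul_smul, wpow_cancel N ω hωN, one_smul]
  refine ⟨?_, ?_, ?_⟩
  · simp only [hq2, mul_ite, mul_one, mul_zero]
    rw [Finset.sum_ite_eq' Finset.univ (0 : ZMod N) P]
    simp [hP0]
  · intro j
    have key : ∀ i : ZMod N, star (P i * q i j) = P (-i) * q (-i) (-j) := by
      intro i
      rw [star_mul, hq3, hPstar, smul_mul_assoc, hcomm', smul_smul,
        wpow_add_aux N ω hωN]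
      have he : -(i * (i - j)) + -(-i * (-j - -i)) = (0 : ZMod N) := by ring
      rw [he]
      simp [wpow]
    rw [star_sum]
    simp only [key]
    exact Fintype.sum_equiv (Equiv.neg (ZMod N)) _ _ (fun i => rfl)
  · intro i j
    have key : ∀ k l : ZMod N, (P k * q k i) * (P l * q l j) =
        (N : ℂ)⁻¹ • (wpow N ω (-(l * (i - k))) • (P (k + l) * (q k i * q l j))) := by
      intro k l
      calc (P k * q k i) * (P l * q l j)
          = P k * ((q k i * P l) * q l j) := by rw [mul_assoc, mul_assoc]
        _ = P k * ((wpow N ω (-(l * (i - k))) • (P l * q k i)) * q l j) := by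
            rw [hcomm']
        _ = wpow N ω (-(l * (i - k))) • (P k * P l * (q k i * q l j)) := by
            rw [smul_mul_assoc, mul_smul_comm, mul_assoc (P l), ← mul_assoc (P k)]
        _ = (N : ℂ)⁻¹ • (wpow N ω (-(l * (i - k))) • (P (k + l) * (q k i * q l j))) := by
            rw [hPmul, smul_mul_assoc, smul_comm]
    rw [Finset.sum_mul_sum]
    simp only [key]
    rw [Finset.sum_comm]
    have reidx : ∀ l : ZMod N,
        (∑ k : ZMod N, (N : ℂ)⁻¹ • (wpow N ω (-(l * (i - k))) • (P (k + l) * (q k i * q l j))))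
        = ∑ m : ZMod N, (N : ℂ)⁻¹ •
            (wpow N ω (-(l * (i - m + l))) • (P m * (q (m - l) i * q l j))) := by
      intro l
      refine Fintype.sum_equiv (Equiv.addRight l) _ _ (fun k => ?_)
      simp only [Equiv.coe_addRight, add_sub_cancel_right]
      have he : -(l * (i - (k + l) + l)) = -(l * (i - k)) := by ring
      rw [he]
    simp only [reidx]
    rw [Finset.sum_comm, Finset.smul_sum]
    refine Finset.sum_congr rfl (fun m _ => ?_)
    rw [hq4 i j m, Finset.mul_sum, Finset.smul_sum]
    refine Finset.sum_congr rfl (fun l _ => ?_)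
    rw [mul_smul_comm]
end
end
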